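/- For positive reals α, β and integer n ≥ 1, ∑_{j=1}^{n} C(n,j)·Beta(j+β-1, n-j+α) = ∑_{k=0}^{n-1} Beta(α+k, β). -/

import Mathlib

/-!
Only the Gamma recursion `B(x + 1, y) + B(x, y + 1) = B(x, y)` is needed. With Pascal's rule it
shows that the binomially weighted sum along the `n`-th antidiagonal of `(i, m) ↦ B(β + i, α + m)`
exceeds the one along the `(n - 1)`-st by `B(β, α + n)`, which telescopes into the right-hand side.
-/

open Finset
noncomputable def Beta (x y : ℝ) : ℝ := Real.Gamma x * Real.Gamma y / Real.Gamma (x + y)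

theorem Beta_comm (x y : ℝ) : Beta x y = Beta y x := by
  rw [Beta, Beta, add_comm, mul_comm]

theorem Beta_add_one_left_add_Beta_add_one_right {x y : ℝ} (hx : x ≠ 0) (hy : y ≠ 0)
    (hxy : x + y ≠ 0) : Beta (x + 1) y + Beta x (y + 1) = Beta x y := by
  rw [Beta, Beta, Beta, Real.Gamma_add_one hx, Real.Gamma_add_one hy, add_right_comm,
    ← add_assoc, Real.Gamma_add_one hxy]
  rcases eq_or_ne (Real.Gamma (x + y)) 0 with h | h
  · simp [h]
  · field_simp

theorem sum_antidiagonal_choose_succ_mul_eq_sum_range {R : Type*} [Semiring R] {g : ℕ → ℕ → R}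
    (hg : ∀ i m, g (i + 1) m + g i (m + 1) = g i m) (n : ℕ) :
    ∑ p ∈ antidiagonal n, ((n + 1).choose (p.1 + 1) : R) * g p.1 p.2 =
      ∑ k ∈ range (n + 1), g 0 k := by
  induction n with
  | zero => simp
  | succ n ih =>
    calc ∑ p ∈ antidiagonal (n + 1), ((n + 2).choose (p.1 + 1) : R) * g p.1 p.2
        = ∑ p ∈ antidiagonal (n + 1), ((n + 1).choose p.1 : R) * g p.1 p.2 +
            ∑ p ∈ antidiagonal (n + 1), ((n + 1).choose (p.1 + 1) : R) * g p.1 p.2 := by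
          simp only [Nat.choose_succ_succ', Nat.cast_add, add_mul, sum_add_distrib]
      _ = g 0 (n + 1) + ∑ p ∈ antidiagonal n, ((n + 1).choose (p.1 + 1) : R) *
            (g (p.1 + 1) p.2 + g p.1 (p.2 + 1)) := by
          rw [Nat.sum_antidiagonal_succ, Nat.sum_antidiagonal_succ' (n := n)]
          simp [mul_add, sum_add_distrib, add_assoc]
      _ = ∑ k ∈ range (n + 2), g 0 k := by
          simp only [hg, ih, sum_range_succ _ (n + 1), add_comm]

theorem beta_sum_identity_general
    (α β : ℝ) (hα : 0 < α) (hβ : 0 < β) (n : ℕ) :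
    ∑ j ∈ Finset.Icc 1 n, (n.choose j : ℝ) * Beta ((j : ℝ) + β - 1) ((n : ℝ) - (j : ℝ) + α) =
      ∑ k ∈ Finset.range n, Beta (α + (k : ℝ)) β := by
  have hg : ∀ i m : ℕ, Beta (β + ↑(i + 1)) (α + m) + Beta (β + i) (α + ↑(m + 1)) =
      Beta (β + i) (α + m) := fun i m => by
    push_cast
    rw [← add_assoc, ← add_assoc]
    exact Beta_add_one_left_add_Beta_add_one_right (by positivity) (by positivity) (by positivity)
  obtain _ | m := n
  · simp
  calc ∑ j ∈ Icc 1 (m + 1), ((m + 1).choose j : ℝ) * Beta (j + β - 1) (↑(m + 1) - j + α)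
      = ∑ k ∈ range (m + 1), ((m + 1).choose (k + 1) : ℝ) * Beta (β + k) (α + ↑(m - k)) := by
        rw [← Ico_add_one_right_eq_Icc, sum_Ico_eq_sum_range, Nat.add_sub_cancel]
        refine sum_congr rfl fun k hk => ?_
        rw [Nat.cast_sub (Nat.lt_succ_iff.mp (mem_range.mp hk)), add_comm 1 k]
        push_cast
        congr 2 <;> ring
    _ = ∑ p ∈ antidiagonal m, ((m + 1).choose (p.1 + 1) : ℝ) * Beta (β + p.1) (α + p.2) :=
        (Nat.sum_antidiagonal_eq_sum_range_succ
          (fun i j => ((m + 1).choose (i + 1) : ℝ) * Beta (β + i) (α + j)) m).symm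
    _ = ∑ k ∈ range (m + 1), Beta (β + (0 : ℕ)) (α + k) :=
        sum_antidiagonal_choose_succ_mul_eq_sum_range (g := fun i j => Beta (β + i) (α + j)) hg m
    _ = ∑ k ∈ range (m + 1), Beta (α + k) β := by
        simp [Beta_comm]

theorem beta_sum_identity
    (α β : ℝ) (hα : 0 < α) (hβ : 0 < β) (n : ℕ) (hn : 1 ≤ n) :
    ∑ j ∈ Finset.Icc 1 n, (n.choose j : ℝ) * Beta ((j : ℝ) + β - 1) ((n : ℝ) - (j : ℝ) + α) =
      ∑ k ∈ Finset.range n, Beta (α + (k : ℝ)) β :=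
  beta_sum_identity_general α β hα hβ n
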